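/- Let 1 < M ≤ d+1, γ > 0, and let κ_A, κ_U : [0,4] → ℝ with κ_A decreasing and κ_U decreasing and convex. Define the kernel contrastive loss L_KCL(U,V) = −(1/M) Σ_{i=1}^M κ_A(‖u_i − v_i‖²) + (γ/(M(M−1))) Σ_{i≠j} κ_U(‖u_i − u_j‖²) for M-tuples U, V of unit vectors in ℝ^d, and its symmetric version L_sym(U,V) = ½(L_KCL(U,V) + L_KCL(V,U)). Then every configuration with u_i = v_i for all i and ⟨u_i, u_j⟩ = −1/(M−1) for all i ≠ j attains the minimum of L_sym over all such (U,V). Moreover, if κ_A is strictly decreasing and κ_U is strictly decreasing and strictly convex, these configurations are the unique minimizers. -/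

import Mathlib

/-!
For unit vectors `‖u - v‖² = 2 - 2⟪u, v⟫ ∈ [0, 4]`. Since `κA` is decreasing, the alignment term
is largest, equal to `κA 0`, exactly when `uᵢ = vᵢ` for all `i`. The `M (M - 1)` squared distances
between distinct `uᵢ` sum to `2M² - 2‖∑ uᵢ‖² ≤ 2M²`, so their mean is at most `2M / (M - 1)`;
Jensen's inequality and monotonicity bound the mean of `κU` over them below by
`κU (2M / (M - 1))`, and for strict `κU` equality forces every distance to be `2M / (M - 1)`,
i.e. `⟪uᵢ, uⱼ⟫ = -1 / (M - 1)`. So both halves of the symmetric loss are at least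
`-κA 0 + γ κU (2M / (M - 1))`, with equality at aligned regular simplices. Such a simplex exists
in `ℝᵈ`: the projections of the basis vectors of `ℝᴹ` onto `(1, …, 1)ᗮ`, a space of dimension
`M - 1 ≤ d`, form one after rescaling.
-/
open scoped BigOperators RealInnerProductSpace

noncomputable section

/-- Mini-batch kernel contrastive loss with radial kernel profiles `κA, κU` and
weighting coefficient `γ`. -/
def Lkcl (d M : ℕ) (γ : ℝ) (κA κU : ℝ → ℝ)
    (U V : Fin M → EuclideanSpace ℝ (Fin d)) : ℝ :=
  -((1 / (M : ℝ)) * ∑ i, κA (‖U i - V i‖ ^ 2)) +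
    (γ / ((M : ℝ) * ((M : ℝ) - 1))) *
      ∑ i, ∑ j ∈ Finset.univ.erase i, κU (‖U i - U j‖ ^ 2)

/-- Symmetrised kernel contrastive loss. -/
def LkclSym (d M : ℕ) (γ : ℝ) (κA κU : ℝ → ℝ)
    (U V : Fin M → EuclideanSpace ℝ (Fin d)) : ℝ :=
  (Lkcl d M γ κA κU U V + Lkcl d M γ κA κU V U) / 2

open Finset

section JensenMean

variable {ι : Type*} {s : Set ℝ} {f : ℝ → ℝ} {t : Finset ι} {x : ι → ℝ} {c : ℝ}

lemma ConvexOn.mean_mem_and_map_mean_le (hf : ConvexOn ℝ s f) (ht : t.Nonempty)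
    (hx : ∀ i ∈ t, x i ∈ s) :
    (#t : ℝ)⁻¹ * ∑ i ∈ t, x i ∈ s ∧
      f ((#t : ℝ)⁻¹ * ∑ i ∈ t, x i) ≤ (#t : ℝ)⁻¹ * ∑ i ∈ t, f (x i) := by
  have hw₀ : ∀ i ∈ t, (0 : ℝ) ≤ (#t : ℝ)⁻¹ := fun _ _ => by positivity
  have hw₁ : ∑ _i ∈ t, (#t : ℝ)⁻¹ = 1 := by
    rw [sum_const, nsmul_eq_mul, mul_inv_cancel₀ (by exact_mod_cast ht.card_ne_zero)]
  simp only [mul_sum]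
  simp only [← smul_eq_mul]
  exact ⟨hf.1.sum_mem hw₀ hw₁ hx, hf.map_sum_le hw₀ hw₁ hx⟩

lemma AntitoneOn.card_mul_le_sum_of_convexOn (hf : AntitoneOn f s) (hfc : ConvexOn ℝ s f)
    (ht : t.Nonempty) (hx : ∀ i ∈ t, x i ∈ s) (hc : c ∈ s) (hmean : ∑ i ∈ t, x i ≤ #t * c) :
    #t * f c ≤ ∑ i ∈ t, f (x i) := by
  have hcard : (0 : ℝ) < #t := by exact_mod_cast ht.card_pos
  obtain ⟨hμ, hjensen⟩ := hfc.mean_mem_and_map_mean_le ht hx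
  have hμc : (#t : ℝ)⁻¹ * ∑ i ∈ t, x i ≤ c := by rwa [inv_mul_le_iff₀ hcard]
  rw [← le_inv_mul_iff₀ hcard]
  exact (hf hμ hc hμc).trans hjensen

lemma StrictAntiOn.eq_of_sum_eq_card_mul_of_strictConvexOn (hf : StrictAntiOn f s)
    (hfc : StrictConvexOn ℝ s f) (hx : ∀ i ∈ t, x i ∈ s) (hc : c ∈ s)
    (hmean : ∑ i ∈ t, x i ≤ #t * c) (heq : ∑ i ∈ t, f (x i) = #t * f c) :
    ∀ i ∈ t, x i = c := by
  intro i hi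
  have hcard : (0 : ℝ) < #t := by exact_mod_cast card_pos.2 ⟨i, hi⟩
  obtain ⟨hμ, -⟩ := hfc.convexOn.mean_mem_and_map_mean_le ⟨i, hi⟩ hx
  have hμc : (#t : ℝ)⁻¹ * ∑ i ∈ t, x i ≤ c := by rwa [inv_mul_le_iff₀ hcard]
  -- Jensen's inequality is an equality here, so all the `x j` coincide.
  have hconst : ∀ j ∈ t, x j = x i := by
    refine fun j hj => hfc.eq_of_le_map_sum (w := fun _ => (#t : ℝ)⁻¹)
      (fun _ _ => by positivity) ?_ hx ?_ hj hi
    · rw [sum_const, nsmul_eq_mul, mul_inv_cancel₀ hcard.ne']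
    · simp only [smul_eq_mul, ← mul_sum, heq, ← mul_assoc, inv_mul_cancel₀ hcard.ne',
        one_mul]
      exact hf.antitoneOn hμ hc hμc
  have hfx : f (x i) = f c := by
    rw [sum_congr rfl fun j hj => congrArg f (hconst j hj), sum_const, nsmul_eq_mul] at heq
    exact mul_left_cancel₀ hcard.ne' heq
  exact hf.injOn (hx i hi) hc hfx

end JensenMean

section UnitVectors

variable {E : Type*} [NormedAddCommGroup E] {ι : Type*} [Fintype ι] {κ : ℝ → ℝ} {u v : ι → E}

lemma norm_sub_sq_mem_Icc {x y : E} (hx : ‖x‖ = 1) (hy : ‖y‖ = 1) :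
    ‖x - y‖ ^ 2 ∈ Set.Icc (0 : ℝ) 4 := by
  have h := norm_sub_le x y
  rw [hx, hy] at h
  exact ⟨by positivity, by nlinarith [norm_nonneg (x - y)]⟩

lemma sum_kernel_norm_sub_sq_le (hκ : AntitoneOn κ (Set.Icc 0 4)) (hu : ∀ i, ‖u i‖ = 1)
    (hv : ∀ i, ‖v i‖ = 1) :
    ∑ i, κ (‖u i - v i‖ ^ 2) ≤ Fintype.card ι * κ 0 := by
  rw [← nsmul_eq_mul, ← card_univ]
  exact sum_le_card_nsmul _ _ _ fun i _ =>
    hκ (by simp) (norm_sub_sq_mem_Icc (hu i) (hv i)) (norm_sub_sq_mem_Icc (hu i) (hv i)).1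

lemma eq_of_sum_kernel_norm_sub_sq_eq (hκ : StrictAntiOn κ (Set.Icc 0 4))
    (hu : ∀ i, ‖u i‖ = 1) (hv : ∀ i, ‖v i‖ = 1)
    (heq : ∑ i, κ (‖u i - v i‖ ^ 2) = Fintype.card ι * κ 0) (i : ι) : u i = v i := by
  have hmem : ∀ i, ‖u i - v i‖ ^ 2 ∈ Set.Icc (0 : ℝ) 4 := fun i =>
    norm_sub_sq_mem_Icc (hu i) (hv i)
  have hle : ∀ i ∈ univ, κ (‖u i - v i‖ ^ 2) ≤ κ 0 := fun i _ =>
    hκ.antitoneOn (by simp) (hmem i) (hmem i).1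
  rw [← card_univ, ← nsmul_eq_mul, ← sum_const] at heq
  have hκi := (sum_eq_sum_iff_of_le hle).1 heq i (mem_univ i)
  have : ‖u i - v i‖ ^ 2 = 0 := hκ.injOn (hmem i) (by simp) hκi
  simpa [sub_eq_zero] using this

variable [InnerProductSpace ℝ E] [DecidableEq ι]

lemma norm_sub_sq_eq_two_sub_two_inner {x y : E} (hx : ‖x‖ = 1) (hy : ‖y‖ = 1) :
    ‖x - y‖ ^ 2 = 2 - 2 * ⟪x, y⟫ := by
  rw [norm_sub_sq_real, hx, hy]; ring

lemma sum_sum_erase_norm_sub_sq (hu : ∀ i, ‖u i‖ = 1) :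
    ∑ i, ∑ j ∈ univ.erase i, ‖u i - u j‖ ^ 2 =
      2 * (Fintype.card ι : ℝ) ^ 2 - 2 * ‖∑ i, u i‖ ^ 2 := by
  rw [sum_congr rfl fun i _ => sum_erase (f := fun j => ‖u i - u j‖ ^ 2) univ (by simp)]
  simp only [norm_sub_sq_eq_two_sub_two_inner (hu _) (hu _), ← real_inner_self_eq_norm_sq,
    sum_inner, inner_sum, sum_sub_distrib, ← mul_sum, sum_const, card_univ, nsmul_eq_mul]
  rw [sum_comm]
  ring

lemma card_sigma_univ_erase (hn : 1 ≤ Fintype.card ι) :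
    (#(univ.sigma fun i : ι => univ.erase i) : ℝ) =
      Fintype.card ι * ((Fintype.card ι : ℝ) - 1) := by
  simp [card_sigma, card_erase_of_mem, Nat.cast_sub hn]

lemma mk_mem_sigma_univ_erase {i j : ι} (hij : i ≠ j) :
    (⟨i, j⟩ : Σ _ : ι, ι) ∈ univ.sigma fun i : ι => univ.erase i :=
  mem_sigma.2 ⟨mem_univ _, mem_erase.2 ⟨hij.symm, mem_univ _⟩⟩

lemma two_mul_div_sub_one_mem_Icc {n : ℝ} (hn : 2 ≤ n) :
    2 * n / (n - 1) ∈ Set.Icc (0 : ℝ) 4 := by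
  have hn1 : 0 < n - 1 := by linarith
  refine ⟨by positivity, ?_⟩
  rw [div_le_iff₀ hn1]
  linarith

lemma sum_sigma_univ_erase_norm_sub_sq_le (hn : 1 < Fintype.card ι) (hu : ∀ i, ‖u i‖ = 1) :
    ∑ p ∈ univ.sigma (fun i : ι => univ.erase i), ‖u p.1 - u p.2‖ ^ 2 ≤
      #(univ.sigma fun i : ι => univ.erase i) *
        (2 * Fintype.card ι / ((Fintype.card ι : ℝ) - 1)) := by
  have hn1 : (Fintype.card ι : ℝ) - 1 ≠ 0 := by
    have : (1 : ℝ) < Fintype.card ι := by exact_mod_cast hn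
    linarith
  rw [sum_sigma, card_sigma_univ_erase hn.le, sum_sum_erase_norm_sub_sq hu]
  field_simp
  nlinarith [sq_nonneg ‖∑ i, u i‖]

lemma card_mul_le_sum_sum_erase_kernel (hn : 1 < Fintype.card ι)
    (hκ : AntitoneOn κ (Set.Icc 0 4)) (hκc : ConvexOn ℝ (Set.Icc 0 4) κ)
    (hu : ∀ i, ‖u i‖ = 1) :
    Fintype.card ι * ((Fintype.card ι : ℝ) - 1) *
        κ (2 * Fintype.card ι / ((Fintype.card ι : ℝ) - 1)) ≤
      ∑ i, ∑ j ∈ univ.erase i, κ (‖u i - u j‖ ^ 2) := by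
  obtain ⟨i, j, hij⟩ := Fintype.exists_pair_of_one_lt_card hn
  have := hκ.card_mul_le_sum_of_convexOn hκc (t := univ.sigma fun i : ι => univ.erase i)
    (x := fun p => ‖u p.1 - u p.2‖ ^ 2)
    ⟨⟨i, j⟩, mk_mem_sigma_univ_erase hij⟩
    (fun p _ => norm_sub_sq_mem_Icc (hu _) (hu _))
    (two_mul_div_sub_one_mem_Icc (by exact_mod_cast hn))
    (sum_sigma_univ_erase_norm_sub_sq_le hn hu)
  simpa only [sum_sigma, card_sigma_univ_erase hn.le] using this

lemma inner_eq_of_sum_sum_erase_kernel_eq (hn : 1 < Fintype.card ι)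
    (hκ : StrictAntiOn κ (Set.Icc 0 4)) (hκc : StrictConvexOn ℝ (Set.Icc 0 4) κ)
    (hu : ∀ i, ‖u i‖ = 1)
    (heq : ∑ i, ∑ j ∈ univ.erase i, κ (‖u i - u j‖ ^ 2) =
      Fintype.card ι * ((Fintype.card ι : ℝ) - 1) *
        κ (2 * Fintype.card ι / ((Fintype.card ι : ℝ) - 1)))
    {i j : ι} (hij : i ≠ j) :
    ⟪u i, u j⟫ = -1 / ((Fintype.card ι : ℝ) - 1) := by
  have hn1 : (Fintype.card ι : ℝ) - 1 ≠ 0 := by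
    have : (1 : ℝ) < Fintype.card ι := by exact_mod_cast hn
    linarith
  have hdist := hκ.eq_of_sum_eq_card_mul_of_strictConvexOn hκc
    (t := univ.sigma fun i : ι => univ.erase i) (x := fun p => ‖u p.1 - u p.2‖ ^ 2)
    (fun p _ => norm_sub_sq_mem_Icc (hu _) (hu _))
    (two_mul_div_sub_one_mem_Icc (by exact_mod_cast hn))
    (sum_sigma_univ_erase_norm_sub_sq_le hn hu) (by rwa [sum_sigma, card_sigma_univ_erase hn.le])
    ⟨i, j⟩ (mk_mem_sigma_univ_erase hij)
  rw [norm_sub_sq_eq_two_sub_two_inner (hu i) (hu j)] at hdist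
  field_simp at hdist ⊢
  linarith

end UnitVectors

section RegularSimplex

open Module

lemma exists_linearIsometry_of_finrank_le {𝕜 V E : Type*} [RCLike 𝕜]
    [NormedAddCommGroup V] [InnerProductSpace 𝕜 V] [FiniteDimensional 𝕜 V]
    [NormedAddCommGroup E] [InnerProductSpace 𝕜 E] [FiniteDimensional 𝕜 E]
    (h : finrank 𝕜 V ≤ finrank 𝕜 E) : Nonempty (V →ₗᵢ[𝕜] E) := by
  set bV := stdOrthonormalBasis 𝕜 V
  set bE := stdOrthonormalBasis 𝕜 E
  have hon : Orthonormal 𝕜 (bV.toBasis.constr 𝕜 (bE ∘ Fin.castLE h) ∘ bV.toBasis) := by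
    convert bE.orthonormal.comp _ (Fin.castLE_injective h)
    exact funext fun k => bV.toBasis.constr_basis 𝕜 _ k
  exact ⟨(bV.toBasis.constr 𝕜 (bE ∘ Fin.castLE h)).isometryOfOrthonormal
    (by rw [bV.coe_toBasis]; exact bV.orthonormal) hon⟩

variable {ι : Type*} [Fintype ι]

def allOnes (ι : Type*) : EuclideanSpace ℝ ι := WithLp.toLp 2 fun _ => 1

lemma finrank_orthogonal_allOnes [Nonempty ι] :
    finrank ℝ (ℝ ∙ allOnes ι)ᗮ = Fintype.card ι - 1 := by
  have hones : allOnes ι ≠ 0 := by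
    intro h
    simpa [allOnes] using congrArg (fun v : EuclideanSpace ℝ ι => v (Classical.arbitrary ι)) h
  have := Submodule.finrank_add_finrank_orthogonal (ℝ ∙ allOnes ι)
  rw [finrank_span_singleton hones, finrank_euclideanSpace] at this
  omega

variable [DecidableEq ι]

/-- The orthogonal projection of the basis vector `eᵢ` onto the hyperplane `(1, …, 1)ᗮ`. -/
def centeredSingle (i : ι) : EuclideanSpace ℝ ι :=
  WithLp.toLp 2 fun k => (if k = i then 1 else 0) - (Fintype.card ι : ℝ)⁻¹

lemma inner_centeredSingle [Nonempty ι] (i j : ι) :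
    ⟪centeredSingle i, centeredSingle j⟫ =
      (if i = j then 1 else 0) - (Fintype.card ι : ℝ)⁻¹ := by
  simp [centeredSingle, PiLp.inner_apply, sub_mul, mul_sub, sum_sub_distrib, ite_mul, mul_ite]

lemma centeredSingle_mem_orthogonal [Nonempty ι] (i : ι) :
    centeredSingle i ∈ (ℝ ∙ allOnes ι)ᗮ := by
  rw [Submodule.mem_orthogonal_singleton_iff_inner_right]
  simp [allOnes, centeredSingle, PiLp.inner_apply, sum_sub_distrib]

lemma exists_regularSimplex {E : Type*} [NormedAddCommGroup E] [InnerProductSpace ℝ E]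
    [FiniteDimensional ℝ E] (hn : 1 < Fintype.card ι) (hE : Fintype.card ι ≤ finrank ℝ E + 1) :
    ∃ u : ι → E, (∀ i, ‖u i‖ = 1) ∧
      ∀ i j, i ≠ j → ⟪u i, u j⟫ = -1 / ((Fintype.card ι : ℝ) - 1) := by
  have : Nonempty ι := Fintype.card_pos_iff.1 (by omega)
  obtain ⟨L⟩ := exists_linearIsometry_of_finrank_le (𝕜 := ℝ) (E := E)
    (V := (ℝ ∙ allOnes ι)ᗮ) (by rw [finrank_orthogonal_allOnes]; omega)
  have hn' : (1 : ℝ) < Fintype.card ι := by exact_mod_cast hn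
  set n : ℝ := (Fintype.card ι : ℝ)
  have hn1 : n - 1 ≠ 0 := by linarith
  -- `r` rescales the Gram matrix `δᵢⱼ - 1/n` of the `centeredSingle i` to `1` on the diagonal
  set r := √(n / (n - 1))
  have hr : r ^ 2 = n / (n - 1) := Real.sq_sqrt (div_nonneg (by linarith) (by linarith))
  set u : ι → E := fun i => r • L ⟨_, centeredSingle_mem_orthogonal i⟩
  have hgram : ∀ i j, ⟪u i, u j⟫ = r ^ 2 * ((if i = j then 1 else 0) - n⁻¹) := by
    intro i j
    rw [real_inner_smul_left, real_inner_smul_right, L.inner_map_map, Submodule.coe_inner,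
      inner_centeredSingle]
    ring
  refine ⟨u, fun i => ?_, fun i j hij => ?_⟩
  · rw [norm_eq_sqrt_real_inner, hgram, if_pos rfl, hr, Real.sqrt_eq_one]
    field_simp
  · rw [hgram, if_neg hij, hr]
    field_simp
    ring

end RegularSimplex

section Loss

variable {d M : ℕ} {γ : ℝ} {κA κU : ℝ → ℝ} {U V : Fin M → EuclideanSpace ℝ (Fin d)}

def lkclMin (M : ℕ) (γ : ℝ) (κA κU : ℝ → ℝ) : ℝ :=
  -κA 0 + γ * κU (2 * M / ((M : ℝ) - 1))

lemma Lkcl_eq_lkclMin_add (hM : 1 < M) :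
    Lkcl d M γ κA κU U V = lkclMin M γ κA κU +
      ((M * κA 0 - ∑ i, κA (‖U i - V i‖ ^ 2)) / M +
        γ * ((∑ i, ∑ j ∈ univ.erase i, κU (‖U i - U j‖ ^ 2) -
          M * ((M : ℝ) - 1) * κU (2 * M / ((M : ℝ) - 1))) / (M * ((M : ℝ) - 1)))) := by
  have hM' : (1 : ℝ) < M := by exact_mod_cast hM
  have hM0 : (M : ℝ) ≠ 0 := by positivity
  have hM1 : (M : ℝ) - 1 ≠ 0 := by linarith
  rw [Lkcl, lkclMin]
  field_simp
  ring

lemma lkclMin_le_Lkcl (hM : 1 < M) (hγ : 0 ≤ γ) (hκA : AntitoneOn κA (Set.Icc 0 4))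
    (hκU : AntitoneOn κU (Set.Icc 0 4)) (hκUc : ConvexOn ℝ (Set.Icc 0 4) κU)
    (hU : ∀ i, ‖U i‖ = 1) (hV : ∀ i, ‖V i‖ = 1) :
    lkclMin M γ κA κU ≤ Lkcl d M γ κA κU U V := by
  have hA := sum_kernel_norm_sub_sq_le hκA hU hV
  have hB := card_mul_le_sum_sum_erase_kernel (by simpa using hM) hκU hκUc hU
  simp only [Fintype.card_fin] at hA hB
  rw [Lkcl_eq_lkclMin_add hM]
  have hM' : (1 : ℝ) < M := by exact_mod_cast hM
  have hN : (0 : ℝ) < M * ((M : ℝ) - 1) := by nlinarith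
  have := div_nonneg (sub_nonneg.2 hA) (by positivity : (0 : ℝ) ≤ M)
  have := mul_nonneg hγ (div_nonneg (sub_nonneg.2 hB) hN.le)
  linarith

lemma Lkcl_self_eq_lkclMin (hM : 1 < M) (hU : ∀ i, ‖U i‖ = 1)
    (hs : ∀ i j, i ≠ j → ⟪U i, U j⟫ = -1 / ((M : ℝ) - 1)) :
    Lkcl d M γ κA κU U U = lkclMin M γ κA κU := by
  have hM1 : (M : ℝ) - 1 ≠ 0 := by
    have : (1 : ℝ) < M := by exact_mod_cast hM
    linarith
  have hdist : ∀ i, ∀ j ∈ univ.erase i, ‖U i - U j‖ ^ 2 = 2 * M / ((M : ℝ) - 1) := by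
    intro i j hj
    rw [norm_sub_sq_eq_two_sub_two_inner (hU i) (hU j), hs i j (ne_of_mem_erase hj).symm]
    field_simp
    ring
  have hB : ∑ i, ∑ j ∈ univ.erase i, κU (‖U i - U j‖ ^ 2) =
      M * ((M : ℝ) - 1) * κU (2 * M / ((M : ℝ) - 1)) := by
    rw [sum_congr rfl fun i _ => sum_congr rfl fun j hj => congrArg κU (hdist i j hj)]
    simp [card_erase_of_mem, Nat.cast_sub hM.le, mul_assoc]
  rw [Lkcl_eq_lkclMin_add hM, hB]
  simp

lemma eq_of_Lkcl_eq_lkclMin (hM : 1 < M) (hγ : 0 < γ) (hκA : StrictAntiOn κA (Set.Icc 0 4))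
    (hκU : StrictAntiOn κU (Set.Icc 0 4)) (hκUc : StrictConvexOn ℝ (Set.Icc 0 4) κU)
    (hU : ∀ i, ‖U i‖ = 1) (hV : ∀ i, ‖V i‖ = 1)
    (h : Lkcl d M γ κA κU U V = lkclMin M γ κA κU) :
    (∀ i, U i = V i) ∧ ∀ i j, i ≠ j → ⟪U i, U j⟫ = -1 / ((M : ℝ) - 1) := by
  have hA := sum_kernel_norm_sub_sq_le hκA.antitoneOn hU hV
  have hB :=
    card_mul_le_sum_sum_erase_kernel (by simpa using hM) hκU.antitoneOn hκUc.convexOn hU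
  simp only [Fintype.card_fin] at hA hB
  rw [Lkcl_eq_lkclMin_add hM] at h
  have hM' : (1 : ℝ) < M := by exact_mod_cast hM
  have hN : (0 : ℝ) < M * ((M : ℝ) - 1) := by nlinarith
  have hA0 := div_nonneg (sub_nonneg.2 hA) (by positivity : (0 : ℝ) ≤ M)
  have hB0 := div_nonneg (sub_nonneg.2 hB) hN.le
  obtain ⟨hdA, hdB⟩ := (add_eq_zero_iff_of_nonneg hA0 (mul_nonneg hγ.le hB0)).1
    (add_eq_left.1 h)
  have hAeq := (sub_eq_zero.1 ((div_eq_zero_iff.1 hdA).resolve_right (by positivity))).symm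
  have hBeq := sub_eq_zero.1 ((div_eq_zero_iff.1
    ((mul_eq_zero.1 hdB).resolve_left hγ.ne')).resolve_right hN.ne')
  refine ⟨eq_of_sum_kernel_norm_sub_sq_eq hκA hU hV (by simpa using hAeq), fun i j hij => ?_⟩
  simpa using inner_eq_of_sum_sum_erase_kernel_eq (by simpa using hM) hκU hκUc hU
    (by simpa using hBeq) hij

end Loss

theorem stmt_5 (d M : ℕ) (hM : 1 < M) (hMd : M ≤ d + 1) (γ : ℝ) (hγ : 0 < γ)
    (κA κU : ℝ → ℝ)
    (hκA : AntitoneOn κA (Set.Icc 0 4))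
    (hκU : AntitoneOn κU (Set.Icc 0 4))
    (hκUconv : ConvexOn ℝ (Set.Icc 0 4) κU) :
    -- every aligned regular-simplex configuration attains the minimum
    (∀ U V : Fin M → EuclideanSpace ℝ (Fin d),
        (∀ i, ‖U i‖ = 1) → (∀ i, ‖V i‖ = 1) →
        (∀ i, U i = V i) →
        (∀ i j, i ≠ j → ⟪U i, U j⟫ = -1 / ((M : ℝ) - 1)) →
        ∀ U' V' : Fin M → EuclideanSpace ℝ (Fin d),
          (∀ i, ‖U' i‖ = 1) → (∀ i, ‖V' i‖ = 1) →
          LkclSym d M γ κA κU U V ≤ LkclSym d M γ κA κU U' V') ∧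
    -- under strictness these are the only minimizers
    (StrictAntiOn κA (Set.Icc 0 4) → StrictAntiOn κU (Set.Icc 0 4) →
      StrictConvexOn ℝ (Set.Icc 0 4) κU →
      ∀ U V : Fin M → EuclideanSpace ℝ (Fin d),
        (∀ i, ‖U i‖ = 1) → (∀ i, ‖V i‖ = 1) →
        (∀ U' V' : Fin M → EuclideanSpace ℝ (Fin d),
          (∀ i, ‖U' i‖ = 1) → (∀ i, ‖V' i‖ = 1) →
          LkclSym d M γ κA κU U V ≤ LkclSym d M γ κA κU U' V') →
        (∀ i, U i = V i) ∧
        (∀ i j, i ≠ j → ⟪U i, U j⟫ = -1 / ((M : ℝ) - 1))) := by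
  have hsimplex : ∀ U : Fin M → EuclideanSpace ℝ (Fin d), (∀ i, ‖U i‖ = 1) →
      (∀ i j, i ≠ j → ⟪U i, U j⟫ = -1 / ((M : ℝ) - 1)) →
      LkclSym d M γ κA κU U U = lkclMin M γ κA κU := fun U hU hs => by
    rw [LkclSym, add_self_div_two, Lkcl_self_eq_lkclMin hM hU hs]
  have hbound : ∀ U V : Fin M → EuclideanSpace ℝ (Fin d), (∀ i, ‖U i‖ = 1) →
      (∀ i, ‖V i‖ = 1) → lkclMin M γ κA κU ≤ Lkcl d M γ κA κU U V := fun U V hU hV =>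
    lkclMin_le_Lkcl hM hγ.le hκA hκU hκUconv hU hV
  refine ⟨fun U V hU _ hUV hs U' V' hU' hV' => ?_, fun hsA hsU hsC U V hU hV hmin => ?_⟩
  · obtain rfl : U = V := funext hUV
    have := hbound U' V' hU' hV'
    have := hbound V' U' hV' hU'
    rw [hsimplex U hU hs, LkclSym]
    linarith
  · obtain ⟨U₀, hU₀, hs₀⟩ := exists_regularSimplex (E := EuclideanSpace ℝ (Fin d))
      (ι := Fin M) (by simpa using hM) (by simpa using hMd)
    simp only [Fintype.card_fin] at hs₀
    have hle := hmin U₀ U₀ hU₀ hU₀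
    have := hbound V U hV hU
    rw [hsimplex U₀ hU₀ hs₀, LkclSym] at hle
    exact eq_of_Lkcl_eq_lkclMin hM hγ hsA hsU hsC hU hV
      (le_antisymm (by linarith) (hbound U V hU hV))
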